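/- For all positive integers k, ∑_{m=1}^{2k+1} (-1)^m * (m-1)!/2^{m-1} * S(2k+1, m) = 0, where S denotes Stirling numbers of the second kind. -/

import Mathlib

/-!
Let `F_n(y) = ∑ m! S(n,m) yᵐ` be the Fubini polynomials. The recurrence of `S` turns the sum in
question, with `2k + 1 = n + 1`, into `F_n(-1/2)`. Splitting off the block of the last element,
`S(n+1,m+1) = ∑ C(n,k) S(k,m)`, shows that `∑ F_n(y) xⁿ/n! = 1/(1 - y(eˣ - 1))`, which at
`y = -1/2` is `2/(1 + eˣ)`. Since `2/(1 + eˣ) + 2/(1 + e⁻ˣ) = 2`, `F_n(-1/2) = 0` for even `n ≥ 2`.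
-/

def stirling2 : ℕ → ℕ → ℕ
  | 0, 0 => 1
  | 0, _ + 1 => 0
  | _ + 1, 0 => 0
  | n + 1, k + 1 => (k + 1) * stirling2 n (k + 1) + stirling2 n k

open Finset PowerSeries Nat

theorem stirling2_eq_stirlingSecond : stirling2 = stirlingSecond := by
  funext n k
  induction n generalizing k with
  | zero => cases k <;> rfl
  | succ n ih => cases k <;> simp [stirling2, stirlingSecond_succ_succ, ih]

theorem sum_range_choose_succ_smul {M : Type*} [AddCommMonoid M] (n : ℕ) (f : ℕ → M) :
    ∑ k ∈ range (n + 2), (n + 1).choose k • f k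
      = ∑ k ∈ range (n + 1), n.choose k • (f k + f (k + 1)) := by
  have hshift : ∑ k ∈ range (n + 1), n.choose (k + 1) • f (k + 1) + f 0
      = ∑ k ∈ range (n + 1), n.choose k • f k := by
    rw [sum_range_succ' (fun k => n.choose k • f k), choose_zero_right, one_smul]
    simp [sum_range_succ, choose_succ_self]
  rw [sum_range_succ', choose_zero_right, one_smul]
  simp only [choose_succ_succ, add_smul, smul_add, sum_add_distrib]
  rw [add_assoc, hshift, add_comm]

theorem Nat.stirlingSecond_succ_succ_eq_sum_choose (n m : ℕ) :
    stirlingSecond (n + 1) (m + 1) = ∑ k ∈ range (n + 1), n.choose k * stirlingSecond k m := by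
  induction n generalizing m with
  | zero => cases m <;> rfl
  | succ n ih =>
    have hpascal := sum_range_choose_succ_smul n (stirlingSecond · m)
    simp only [smul_eq_mul] at hpascal
    rw [hpascal]
    cases m with
    | zero => simp [← ih 0, stirlingSecond_succ_succ]
    | succ j =>
      have hsplit : ∀ k, n.choose k * (stirlingSecond k (j + 1) + stirlingSecond (k + 1) (j + 1))
          = (j + 2) * (n.choose k * stirlingSecond k (j + 1)) + n.choose k * stirlingSecond k j := by
        intro k
        rw [stirlingSecond_succ_succ]
        ring
      rw [sum_congr rfl fun k _ => hsplit k, sum_add_distrib, ← mul_sum, ← ih, ← ih,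
        stirlingSecond_succ_succ (n + 1) (j + 1)]

section Fubini

variable {R : Type*} [CommSemiring R]

def fubini (n : ℕ) (y : R) : R :=
  ∑ m ∈ range (n + 1), (m ! * stirlingSecond n m : ℕ) * y ^ m

theorem fubini_eq_sum_range {n N : ℕ} (h : n < N) (y : R) :
    fubini n y = ∑ m ∈ range N, (m ! * stirlingSecond n m : ℕ) * y ^ m := by
  refine sum_subset (range_subset_range.2 h) fun m _ hm => ?_
  rw [stirlingSecond_eq_zero_of_lt (by simpa using hm)]
  simp

theorem sum_choose_mul_fubini (n : ℕ) (y : R) :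
    ∑ k ∈ range (n + 1), n.choose k * fubini k y
      = ∑ m ∈ range (n + 1), (m ! * stirlingSecond (n + 1) (m + 1) : ℕ) * y ^ m := by
  calc ∑ k ∈ range (n + 1), n.choose k * fubini k y
      = ∑ k ∈ range (n + 1), ∑ m ∈ range (n + 1),
          (n.choose k * stirlingSecond k m : ℕ) * ((m ! : ℕ) * y ^ m) := by
        refine sum_congr rfl fun k hk => ?_
        rw [fubini_eq_sum_range (mem_range.1 hk), mul_sum]
        refine sum_congr rfl fun m _ => ?_
        push_cast
        ring
    _ = ∑ m ∈ range (n + 1), (m ! * stirlingSecond (n + 1) (m + 1) : ℕ) * y ^ m := by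
        rw [sum_comm]
        refine sum_congr rfl fun m _ => ?_
        rw [← sum_mul, ← Nat.cast_sum, ← stirlingSecond_succ_succ_eq_sum_choose]
        push_cast
        ring

theorem mul_sum_factorial_mul_stirlingSecond_succ (n : ℕ) (y : R) :
    y * ∑ m ∈ range (n + 1), (m ! * stirlingSecond (n + 1) (m + 1) : ℕ) * y ^ m
        + (if n = 0 then 1 else 0)
      = (1 + y) * fubini n y := by
  have hterm : ∀ m, y * ((m ! * stirlingSecond (n + 1) (m + 1) : ℕ) * y ^ m)
      = ((m + 1)! * stirlingSecond n (m + 1) : ℕ) * y ^ (m + 1)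
        + y * ((m ! * stirlingSecond n m : ℕ) * y ^ m) := by
    intro m
    rw [stirlingSecond_succ_succ, factorial_succ]
    push_cast
    ring
  have hshift : ∑ m ∈ range (n + 1), ((m + 1)! * stirlingSecond n (m + 1) : ℕ) * y ^ (m + 1)
      + (if n = 0 then 1 else 0) = fubini n y := by
    rw [fubini_eq_sum_range (N := n + 2) (by omega), sum_range_succ' _ (n + 1)]
    cases n <;> simp
  rw [mul_sum, sum_congr rfl fun m _ => hterm m, sum_add_distrib, add_right_comm, hshift,
    ← mul_sum, ← fubini]
  ring

theorem mul_sum_choose_mul_fubini (n : ℕ) (y : R) :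
    y * ∑ k ∈ range (n + 1), n.choose k * fubini k y + (if n = 0 then 1 else 0)
      = (1 + y) * fubini n y := by
  rw [sum_choose_mul_fubini, mul_sum_factorial_mul_stirlingSecond_succ]

end Fubini

def fubiniEGF (y : ℚ) : ℚ⟦X⟧ := mk fun n => fubini n y / n !

theorem coeff_exp_mul_fubiniEGF (n : ℕ) (y : ℚ) :
    coeff n (exp ℚ * fubiniEGF y) = (∑ k ∈ range (n + 1), n.choose k * fubini k y) / n ! := by
  rw [mul_comm, coeff_mul, Finset.Nat.sum_antidiagonal_eq_sum_range_succ
    (fun i j => coeff i (fubiniEGF y) * coeff j (exp ℚ)), sum_div]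
  refine sum_congr rfl fun k hk => ?_
  have hkn : k ≤ n := Nat.lt_succ_iff.1 (mem_range.1 hk)
  simp only [fubiniEGF, coeff_mk, coeff_exp, Algebra.algebraMap_self, RingHom.id_apply,
    Nat.cast_choose ℚ hkn]
  field_simp

theorem one_sub_mul_exp_sub_one_mul_fubiniEGF (y : ℚ) :
    (1 - C y * (exp ℚ - 1)) * fubiniEGF y = 1 := by
  ext n
  have key := mul_sum_choose_mul_fubini n y
  simp only [sub_mul, one_mul, mul_assoc, map_sub, coeff_C_mul, coeff_exp_mul_fubiniEGF,
    coeff_one]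
  rw [fubiniEGF, coeff_mk]
  split_ifs with hn
  · subst hn
    simp only [factorial_zero, cast_one, div_one, if_true] at key ⊢
    linear_combination -key
  · rw [if_neg hn, add_zero] at key
    field_simp
    linear_combination -key

theorem one_add_exp_mul_fubiniEGF_neg_half : (1 + exp ℚ) * fubiniEGF (-1 / 2) = 2 := by
  have hC : (2 : ℚ⟦X⟧) * C (-1 / 2) = -1 := by
    rw [← map_ofNat C 2, ← map_mul]
    norm_num
  linear_combination 2 * one_sub_mul_exp_sub_one_mul_fubiniEGF (-1 / 2)
    + (exp ℚ - 1) * fubiniEGF (-1 / 2) * hC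

theorem fubiniEGF_neg_half_add_evalNegHom :
    fubiniEGF (-1 / 2) + evalNegHom (fubiniEGF (-1 / 2)) = 2 := by
  set Φ := fubiniEGF (-1 / 2)
  have h : (1 + exp ℚ) * Φ = 2 := one_add_exp_mul_fubiniEGF_neg_half
  have hneg : (1 + evalNegHom (exp ℚ)) * evalNegHom Φ = 2 := by
    simpa [map_ofNat] using congrArg evalNegHom h
  have hne : (1 + exp ℚ : ℚ⟦X⟧) ≠ 0 := by
    intro h0
    simpa using congrArg constantCoeff h0
  refine mul_left_cancel₀ hne ?_
  calc (1 + exp ℚ) * (Φ + evalNegHom Φ)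
      = 2 + exp ℚ * ((1 + evalNegHom (exp ℚ)) * evalNegHom Φ) := by
        rw [mul_add, h]
        linear_combination (-evalNegHom Φ) * exp_mul_exp_neg_eq_one (A := ℚ)
    _ = (1 + exp ℚ) * 2 := by rw [hneg]; ring

theorem fubini_neg_half_eq_zero_of_even {n : ℕ} (hn : Even n) (hn0 : n ≠ 0) :
    fubini n (-1 / 2 : ℚ) = 0 := by
  have h := congrArg (coeff n) fubiniEGF_neg_half_add_evalNegHom
  rw [map_add, evalNegHom, coeff_rescale, hn.neg_one_pow, one_mul, fubiniEGF, coeff_mk,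
    ← map_ofNat C 2, coeff_C, if_neg hn0, ← two_mul] at h
  simpa [factorial_ne_zero] using h

theorem sum_Icc_stirlingSecond_eq_fubini {n : ℕ} (hn : n ≠ 0) :
    ∑ m ∈ Icc 1 (n + 1), (-1 : ℚ) ^ m * ((m - 1)! : ℚ) / 2 ^ (m - 1) * stirlingSecond (n + 1) m
      = fubini n (-1 / 2 : ℚ) := by
  have hterm : ∀ j : ℕ,
      (-1 : ℚ) ^ (1 + j) * ((1 + j - 1)! : ℚ) / 2 ^ (1 + j - 1) * stirlingSecond (n + 1) (1 + j)
        = 2 * ((-1 / 2) * ((j ! * stirlingSecond (n + 1) (j + 1) : ℕ) * (-1 / 2) ^ j)) := by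
    intro j
    rw [Nat.add_sub_cancel_left, add_comm 1 j, div_pow]
    push_cast
    field_simp
    ring
  have hrec := mul_sum_factorial_mul_stirlingSecond_succ n (-1 / 2 : ℚ)
  rw [if_neg hn, add_zero] at hrec
  rw [← Ico_add_one_right_eq_Icc, sum_Ico_eq_sum_range, Nat.add_sub_cancel,
    sum_congr rfl fun j _ => hterm j, ← mul_sum, ← mul_sum]
  linear_combination 2 * hrec

/-- For `k ≥ 1`, `∑_{m=1}^{2k+1} (-1)^m (m-1)!/2^{m-1} S(2k+1,m) = 0`. -/
theorem sum_stirling2_odd_eq_zero (k : ℕ) (hk : 1 ≤ k) :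
    ∑ m ∈ Finset.Icc 1 (2 * k + 1),
        (-1 : ℚ) ^ m * ((m - 1).factorial : ℚ) / 2 ^ (m - 1) * stirling2 (2 * k + 1) m
      = 0 := by
  rw [stirling2_eq_stirlingSecond, sum_Icc_stirlingSecond_eq_fubini (by omega)]
  exact fubini_neg_half_eq_zero_of_even (even_two_mul k) (by omega)
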